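/- arXiv:1010.2857 — 5 statements merged into one kernel-verified Lean document; each statement's English description precedes it below -/
import Mathlib

section
/- For every positive integer k and every m ≥ 1, in the continuous box game with resets rCBox(m), the second player (CBoxBreaker) has a strategy ensuring that at every point during the first k rounds, every box has weight at most 1 + log(m + k). -/
/-!
Breaker always resets a box of maximum weight. Since `e^(a+d) - e^a ≤ d e^(a+d)` and every box
after Maker's move weighs at most the maximum `M`, Maker's move raises `Φ = ∑ᵢ e^{wᵢ}` by at most
`∑ᵢ δᵢ e^M = e^M`, and the reset replaces `e^M` by `e^0 = 1`. Hence `Φ ≤ m + j` after `j` rounds,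
so every weight at the start of a round `j < k` is at most `log (m + k)`, and Maker adds at most `1`.
-/

open Finset Real Function

lemma exp_add_le_exp_add_mul_exp_add (a d : ℝ) :
    exp (a + d) ≤ exp a + d * exp (a + d) := by
  have h : 1 - d ≤ exp (-d) := by linarith [add_one_le_exp (-d)]
  have hmul : exp (-d) * exp (a + d) = exp a := by rw [← exp_add]; ring_nf
  nlinarith [exp_pos (a + d)]

section Potential

variable {ι : Type*} [Fintype ι] [DecidableEq ι]

theorem sum_exp_update_max_le (w δ : ι → ℝ) (hδ : ∀ i, 0 ≤ δ i) (hδ_sum : ∑ i, δ i = 1)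
    {M : ι} (hM : ∀ i, w i + δ i ≤ w M + δ M) :
    ∑ i, exp (update (w + δ) M 0 i) ≤ ∑ i, exp (w i) + 1 := by
  have hreset : ∑ i, exp (update (w + δ) M 0 i) + exp (w M + δ M) = ∑ i, exp (w i + δ i) + 1 := by
    have h := Finset.sum_update_of_mem (mem_univ M) (exp ∘ (w + δ)) 1
    rw [← exp_zero, ← comp_update] at h
    simp only [comp_apply] at h
    rw [h, exp_zero, sum_eq_sum_sdiff_singleton_add (mem_univ M) (fun i => exp (w i + δ i))]
    simp only [Pi.add_apply]
    ring
  have hmove : ∑ i, exp (w i + δ i) ≤ ∑ i, exp (w i) + exp (w M + δ M) :=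
    calc ∑ i, exp (w i + δ i)
        ≤ ∑ i, (exp (w i) + δ i * exp (w M + δ M)) := by
          gcongr with i
          exact (exp_add_le_exp_add_mul_exp_add _ _).trans <| (add_le_add_iff_left _).2
            (mul_le_mul_of_nonneg_left (exp_le_exp.2 (hM i)) (hδ i))
      _ = ∑ i, exp (w i) + exp (w M + δ M) := by
          rw [sum_add_distrib, ← sum_mul, hδ_sum, one_mul]
  linarith

theorem sum_exp_le_card_add_of_reset_max (δ w : ℕ → ι → ℝ) (r : ℕ → ι)
    (hδ : ∀ j i, 0 ≤ δ j i) (hδ_sum : ∀ j, ∑ i, δ j i = 1) (hw0 : w 0 = 0)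
    (hw : ∀ j, w (j + 1) = update (w j + δ j) (r j) 0)
    (hr : ∀ j i, w j i + δ j i ≤ w j (r j) + δ j (r j)) (j : ℕ) :
    ∑ i, exp (w j i) ≤ Fintype.card ι + j := by
  induction j with
  | zero => simp [hw0]
  | succ j ih =>
    rw [hw j]
    push_cast
    linarith [sum_exp_update_max_le (w j) (δ j) (hδ j) (hδ_sum j) (hr j)]

theorem le_log_card_add_of_reset_max (δ w : ℕ → ι → ℝ) (r : ℕ → ι)
    (hδ : ∀ j i, 0 ≤ δ j i) (hδ_sum : ∀ j, ∑ i, δ j i = 1) (hw0 : w 0 = 0)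
    (hw : ∀ j, w (j + 1) = update (w j + δ j) (r j) 0)
    (hr : ∀ j i, w j i + δ j i ≤ w j (r j) + δ j (r j)) (j : ℕ) (i : ι) :
    w j i ≤ log (Fintype.card ι + j) := by
  have : 0 < Fintype.card ι := Fintype.card_pos_iff.2 ⟨i⟩
  rw [le_log_iff_exp_le (by positivity)]
  exact (single_le_sum (fun i _ => (exp_pos (w j i)).le) (mem_univ i)).trans
    (sum_exp_le_card_add_of_reset_max δ w r hδ hδ_sum hw0 hw hr j)

end Potential

namespace BoxGame

variable {ι : Type*} [Finite ι] [Nonempty ι]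

noncomputable def argmax (f : ι → ℝ) : ι := (Finite.exists_max f).choose

lemma le_argmax (f : ι → ℝ) (i : ι) : f i ≤ f (argmax f) := (Finite.exists_max f).choose_spec i

variable [DecidableEq ι]

noncomputable def greedyStep (w δ : ι → ℝ) : ι → ℝ := update (w + δ) (argmax (w + δ)) 0

noncomputable def greedyWeights (L : List (ι → ℝ)) : ι → ℝ := L.foldl greedyStep 0

/-- The history lists Maker's moves so far, ending with the current one. -/
noncomputable def greedyReset (L : List (ι → ℝ)) : ι :=
  argmax (greedyWeights L.dropLast + L.getLastD 0)

lemma greedyReset_map_range_succ (δ : ℕ → ι → ℝ) (j : ℕ) :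
    greedyReset ((List.range (j + 1)).map δ) =
      argmax (greedyWeights ((List.range j).map δ) + δ j) := by
  rw [greedyReset, List.range_succ, List.map_append, List.map_singleton, List.dropLast_concat,
    List.getLastD_concat]

lemma eq_greedyWeights_of_play (δ w : ℕ → ι → ℝ) (hw0 : ∀ i, w 0 i = 0)
    (hw : ∀ j, w (j + 1) =
      update (fun i => w j i + δ j i) (greedyReset ((List.range (j + 1)).map δ)) 0)
    (j : ℕ) : w j = greedyWeights ((List.range j).map δ) := by
  induction j with
  | zero => exact funext hw0
  | succ j ih =>
    rw [hw j, greedyReset_map_range_succ, ← ih, greedyWeights, List.range_succ, List.map_append,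
      List.map_singleton, List.foldl_concat, ← greedyWeights, ← ih]
    rfl

end BoxGame

open BoxGame

theorem stmt_5_general (m k : ℕ) (hm : 1 ≤ m) :
    ∃ reset : List (Fin m → ℝ) → Fin m,
      ∀ (δ : ℕ → Fin m → ℝ) (w : ℕ → Fin m → ℝ),
        (∀ j i, 0 ≤ δ j i) →
        (∀ j, ∑ i, δ j i = 1) →
        (∀ i, w 0 i = 0) →
        (∀ j, w (j + 1) =
          Function.update (fun i => w j i + δ j i)
            (reset ((List.range (j + 1)).map δ)) 0) →
        ∀ j < k, (∀ i, w j i + δ j i ≤ 1 + Real.log (m + k)) ∧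
          (∀ i, w (j + 1) i ≤ 1 + Real.log (m + k)) := by
  have : Nonempty (Fin m) := ⟨⟨0, hm⟩⟩
  refine ⟨greedyReset, fun δ w hδ hδ_sum hw0 hw j hj => ?_⟩
  have hreset : ∀ j, greedyReset ((List.range (j + 1)).map δ) = argmax (w j + δ j) := fun j => by
    rw [greedyReset_map_range_succ, eq_greedyWeights_of_play δ w hw0 hw]
  have hw' : ∀ j, w (j + 1) = update (w j + δ j) (argmax (w j + δ j)) 0 := fun j => by
    rw [hw j, hreset]; rfl
  have hlog : ∀ i, w j i ≤ log (m + k) := fun i =>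
    (le_log_card_add_of_reset_max δ w _ hδ hδ_sum (funext hw0) hw'
      (fun j => le_argmax (w j + δ j)) j i).trans
      (log_le_log (by positivity) (by simp only [Fintype.card_fin]; gcongr))
  have hmove : ∀ i, w j i + δ j i ≤ 1 + log (m + k) := fun i => by
    have hδ_le : δ j i ≤ 1 := hδ_sum j ▸ single_le_sum (fun i _ => hδ j i) (mem_univ i)
    linarith [hlog i]
  refine ⟨hmove, fun i => ?_⟩
  rw [hw j, update_apply]
  split_ifs
  · linarith [log_nonneg (show (1 : ℝ) ≤ m + k by norm_cast; omega)]
  · exact hmove i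

/-- In the continuous box game with resets `rCBox(m)` on `m ≥ 1`
boxes, CBoxBreaker has a strategy (a function of the history of CBoxMaker's
weight distributions, choosing which box to reset) ensuring that at every point
during the first `k` rounds every box has weight at most `1 + log(m + k)`.
Here `w j` are the weights at the start of round `j+1` (with `w 0 = 0`),
`w j i + δ j i` is the weight of box `i` after CBoxMaker's move in round `j+1`,
and CBoxBreaker then resets the box chosen by his strategy to weight `0`. -/
theorem stmt_5 (m k : ℕ) (hm : 1 ≤ m) (hk : 1 ≤ k) :
    ∃ reset : List (Fin m → ℝ) → Fin m,
      ∀ (δ : ℕ → Fin m → ℝ) (w : ℕ → Fin m → ℝ),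
        (∀ j i, 0 ≤ δ j i) →
        (∀ j, ∑ i, δ j i = 1) →
        (∀ i, w 0 i = 0) →
        (∀ j, w (j + 1) =
          Function.update (fun i => w j i + δ j i)
            (reset ((List.range (j + 1)).map δ)) 0) →
        ∀ j < k, (∀ i, w j i + δ j i ≤ 1 + Real.log (m + k)) ∧
          (∀ i, w (j + 1) i ≤ 1 + Real.log (m + k)) :=
  stmt_5_general m k hm
end

section
/- Let m ≥ 1 and let w : Fin m → ℝ be weights with wᵢ ≥ 0 for all i. Suppose weights are updated to wᵢ' = wᵢ + δᵢ (δᵢ ≥ 0, Σδᵢ = 1), and then one index j achieving the maximum of w' is reset to 0. Then the resulting potential Σᵢ e^{w''ᵢ} (where w''_j = 0 and w''ᵢ = w'ᵢ for i ≠ j) exceeds the original potential Σᵢ e^{wᵢ} by at most 1. -/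
/-!
Each box grows by a factor `exp δᵢ`, and `exp (w + δ) - exp w ≤ δ · exp (w + δ)`; since the updated
weights are bounded by the maximum `M` and `∑ δᵢ = 1`, the increments raise the potential by at most
`exp M`. Resetting the maximal box replaces `exp M` by `exp 0 = 1`.
-/

open Finset

theorem Real.exp_add_sub_exp_le (a d : ℝ) :
    Real.exp (a + d) - Real.exp a ≤ d * Real.exp (a + d) := by
  have h : Real.exp a = Real.exp (a + d) * Real.exp (-d) := by rw [← Real.exp_add]; ring_nf
  have hd : 1 - d ≤ Real.exp (-d) := by linarith [Real.add_one_le_exp (-d)]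
  nlinarith [Real.exp_pos (a + d)]

theorem Finset.sum_update_eq_sub_add {ι G : Type*} [Fintype ι] [DecidableEq ι] [AddCommGroup G]
    (f : ι → G) (j : ι) (b : G) :
    ∑ i, Function.update f j b i = ∑ i, f i - f j + b := by
  rw [sum_update_of_mem (mem_univ j), sum_eq_sum_sdiff_singleton_add (mem_univ j) f]
  abel

theorem sum_exp_add_le_sum_exp_add_exp {ι : Type*} [Fintype ι] (w δ : ι → ℝ) (M : ℝ)
    (hδ : ∀ i, 0 ≤ δ i) (hsum : ∑ i, δ i = 1) (hM : ∀ i, w i + δ i ≤ M) :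
    ∑ i, Real.exp (w i + δ i) ≤ ∑ i, Real.exp (w i) + Real.exp M := by
  have hstep : ∀ i, Real.exp (w i + δ i) - Real.exp (w i) ≤ δ i * Real.exp M := fun i =>
    (Real.exp_add_sub_exp_le (w i) (δ i)).trans <|
      mul_le_mul_of_nonneg_left (Real.exp_le_exp.2 (hM i)) (hδ i)
  have := sum_le_sum fun i (_ : i ∈ univ) => hstep i
  rw [sum_sub_distrib, ← sum_mul, hsum, one_mul] at this
  linarith

theorem stmt_7_general (m : ℕ) (w δ : Fin m → ℝ)
    (hδ : ∀ i, 0 ≤ δ i) (hsum : ∑ i, δ i = 1)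
    (j : Fin m) (hj : ∀ i, w i + δ i ≤ w j + δ j) :
    ∑ i, Real.exp (Function.update (fun i => w i + δ i) j 0 i) ≤
      (∑ i, Real.exp (w i)) + 1 := by
  simp only [Function.apply_update (fun _ => Real.exp)]
  rw [sum_update_eq_sub_add, Real.exp_zero]
  linarith [sum_exp_add_le_sum_exp_add_exp w δ _ hδ hsum hj]

/-- Nonnegative weights `w i` are increased by `δ i ≥ 0` with
`∑ δ i = 1`, and then an index `j` of maximal updated weight is reset to `0`.
The resulting potential exceeds the original potential by at most 1. -/
theorem stmt_7 (m : ℕ) (hm : 1 ≤ m) (w δ : Fin m → ℝ)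
    (hw : ∀ i, 0 ≤ w i) (hδ : ∀ i, 0 ≤ δ i) (hsum : ∑ i, δ i = 1)
    (j : Fin m) (hj : ∀ i, w i + δ i ≤ w j + δ j) :
    ∑ i, Real.exp (Function.update (fun i => w i + δ i) j 0 i) ≤
      (∑ i, Real.exp (w i)) + 1 :=
  stmt_7_general m w δ hδ hsum j hj
end

section
/- Let r be sufficiently large, q ≤ r/(12·log₂ r), and g(r) = o(r). Then Σ_{t=1}^{r} C(r,t)·C(r, r-t+1)·2^{-(t(r-t+1) - g(r)·min(t, r-t+1))/q} = o(1) as r → ∞. In particular, this sum is strictly less than 1/2 for sufficiently large r. -/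
/-!
Every summand is at most `r⁻²`, so the sum over `t ∈ [1, r]` is at most `1 / r`.
With `m = min(t, r-t+1)` the two binomial coefficients are each at most `r ^ m`, while
`t (r-t+1) ≥ m (r+1) / 2` and `g(r) ≤ r / 6` make the exponent at least `m r / 3`; dividing by
`q ≤ r / (12 log₂ r)` turns `2 ^ (-exponent / q)` into at most `r ^ (-4m)`.
-/

open Filter Topology Finset

theorem Nat.choose_le_pow_min (n k : ℕ) : n.choose k ≤ n ^ min k (n - k) := by
  rcases le_or_gt k n with hkn | hnk
  · rcases min_choice k (n - k) with h | h <;> rw [h]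
    · exact choose_le_pow n k
    · rw [← choose_symm hkn]
      exact choose_le_pow n (n - k)
  · simp [choose_eq_zero_of_lt hnk]

theorem Nat.choose_mul_choose_sub_add_one_le {r t : ℕ} (ht : 1 ≤ t) (htr : t ≤ r) :
    r.choose t * r.choose (r - t + 1) ≤ r ^ (2 * min t (r - t + 1)) := by
  have hr : 1 ≤ r := ht.trans htr
  have h₁ : r.choose t ≤ r ^ min t (r - t + 1) :=
    (choose_le_pow_min r t).trans (Nat.pow_le_pow_right hr (by omega))
  have h₂ : r.choose (r - t + 1) ≤ r ^ min t (r - t + 1) :=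
    (choose_le_pow_min r _).trans (Nat.pow_le_pow_right hr (by omega))
  rw [two_mul, pow_add]
  exact Nat.mul_le_mul h₁ h₂

theorem min_mul_add_le_two_mul {α : Type*} [CommRing α] [LinearOrder α] [IsStrictOrderedRing α]
    {x y : α} (hx : 0 ≤ x) (hy : 0 ≤ y) : min x y * (x + y) ≤ 2 * (x * y) := by
  rcases le_total x y with h | h
  · rw [min_eq_left h]; nlinarith
  · rw [min_eq_right h]; nlinarith

theorem two_rpow_neg_div_le_inv_pow {r q E : ℝ} {m : ℕ} (hr : 1 < r) (hq : 0 < q)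
    (hqr : q ≤ r / (12 * Real.logb 2 r)) (hE : m * r / 3 ≤ E) :
    (2 : ℝ) ^ (-(E / q)) ≤ (r ^ (4 * m))⁻¹ := by
  have hr₀ : 0 < r := one_pos.trans hr
  have hlog : 0 < Real.logb 2 r := Real.logb_pos one_lt_two hr
  have hE₀ : 0 ≤ E := le_trans (by positivity) hE
  have hexp : 4 * m * Real.logb 2 r ≤ E / q :=
    calc 4 * m * Real.logb 2 r = m * r / 3 * (12 * Real.logb 2 r) / r := by field_simp; ring
      _ ≤ E * (12 * Real.logb 2 r) / r := by gcongr
      _ = E / (r / (12 * Real.logb 2 r)) := by rw [div_div_eq_mul_div]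
      _ ≤ E / q := div_le_div_of_nonneg_left hE₀ hq hqr
  calc (2 : ℝ) ^ (-(E / q)) ≤ 2 ^ (Real.logb 2 r * -(4 * m : ℕ)) := by
        apply Real.rpow_le_rpow_of_exponent_le one_le_two
        push_cast
        linarith
    _ = (r ^ (4 * m))⁻¹ := by
        rw [Real.rpow_mul zero_le_two, Real.rpow_logb two_pos (by norm_num) hr₀,
          Real.rpow_neg hr₀.le, Real.rpow_natCast]

/-- The term of index `t` in Beck's criterion for the Hall game on `K_{r,r}` minus a graph of
maximum degree `γ`, with bias parameter `q`. -/
noncomputable def beckSummand (γ q : ℝ) (r t : ℕ) : ℝ :=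
  (r.choose t : ℝ) * (r.choose (r - t + 1) : ℝ) *
    (2 : ℝ) ^ (-(((t : ℝ) * ((r : ℝ) - t + 1) - γ * min (t : ℝ) ((r : ℝ) - t + 1)) / q))

theorem beckSummand_nonneg (γ q : ℝ) (r t : ℕ) : 0 ≤ beckSummand γ q r t := by
  unfold beckSummand
  positivity

theorem beckSummand_le_inv_sq {γ q : ℝ} {r t : ℕ} (hr : 2 ≤ r) (hq : 0 < q)
    (hqr : q ≤ r / (12 * Real.logb 2 r)) (hγ : γ ≤ r / 6) (ht : 1 ≤ t) (htr : t ≤ r) :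
    beckSummand γ q r t ≤ ((r : ℝ) ^ 2)⁻¹ := by
  set m := min t (r - t + 1) with hm
  have hr' : (2 : ℝ) ≤ r := by exact_mod_cast hr
  have hmin : min (t : ℝ) ((r : ℝ) - t + 1) = m := by
    rw [hm, Nat.cast_min, Nat.cast_add, Nat.cast_sub htr, Nat.cast_one]
  have hprod : (m : ℝ) * (r + 1) ≤ 2 * (t * ((r : ℝ) - t + 1)) := by
    have := min_mul_add_le_two_mul (Nat.cast_nonneg t)
      (by linarith [(Nat.cast_le.mpr htr : (t : ℝ) ≤ r)] : (0 : ℝ) ≤ r - t + 1)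
    rw [hmin] at this
    linarith
  have hexp : (m : ℝ) * r / 3 ≤ t * ((r : ℝ) - t + 1) - γ * m := by
    have hm₀ : (0 : ℝ) ≤ m := Nat.cast_nonneg m
    linarith [mul_le_mul_of_nonneg_right hγ hm₀]
  have hchoose : (r.choose t : ℝ) * (r.choose (r - t + 1) : ℝ) ≤ (r : ℝ) ^ (2 * m) := by
    exact_mod_cast Nat.choose_mul_choose_sub_add_one_le ht htr
  calc beckSummand γ q r t ≤ (r : ℝ) ^ (2 * m) * ((r : ℝ) ^ (4 * m))⁻¹ := by
        rw [beckSummand, hmin]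
        gcongr
        exact two_rpow_neg_div_le_inv_pow (by linarith) hq hqr hexp
    _ = ((r : ℝ) ^ (2 * m))⁻¹ := by
        rw [show 4 * m = 2 * m + 2 * m by ring, pow_add]
        field_simp
    _ ≤ ((r : ℝ) ^ 2)⁻¹ := by
        gcongr
        · linarith
        · omega

theorem sum_beckSummand_le_inv {γ q : ℝ} {r : ℕ} (hr : 2 ≤ r) (hq : 0 < q)
    (hqr : q ≤ r / (12 * Real.logb 2 r)) (hγ : γ ≤ r / 6) :
    ∑ t ∈ Icc 1 r, beckSummand γ q r t ≤ 1 / r := by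
  have hr₀ : (0 : ℝ) < r := by positivity
  calc ∑ t ∈ Icc 1 r, beckSummand γ q r t ≤ #(Icc 1 r) • ((r : ℝ) ^ 2)⁻¹ :=
        sum_le_card_nsmul _ _ _ fun t ht =>
          beckSummand_le_inv_sq hr hq hqr hγ (mem_Icc.1 ht).1 (mem_Icc.1 ht).2
    _ = 1 / r := by
        rw [Nat.card_Icc, add_tsub_cancel_right, nsmul_eq_mul]
        field_simp

/-- If `g(r) = o(r)` and `0 < q r ≤ r / (12 log₂ r)` for large
`r`, then `∑_{t=1}^r C(r,t) C(r,r-t+1) 2^{-(t(r-t+1) - g(r)·min(t,r-t+1))/q r}`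
tends to `0`; in particular it is eventually less than `1/2`. -/
theorem stmt_10 (g q : ℕ → ℝ)
    (hg : g =o[atTop] fun r : ℕ => (r : ℝ))
    (hq : ∀ᶠ r : ℕ in atTop, 0 < q r ∧ q r ≤ (r : ℝ) / (12 * Real.logb 2 r)) :
    Tendsto (fun r : ℕ =>
        ∑ t ∈ Finset.Icc 1 r,
          (r.choose t : ℝ) * (r.choose (r - t + 1) : ℝ) *
            (2 : ℝ) ^
              (-(((t : ℝ) * ((r : ℝ) - t + 1) -
                  g r * min (t : ℝ) ((r : ℝ) - t + 1)) / q r)))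
      atTop (nhds 0) ∧
    ∀ᶠ r : ℕ in atTop,
      (∑ t ∈ Finset.Icc 1 r,
          (r.choose t : ℝ) * (r.choose (r - t + 1) : ℝ) *
            (2 : ℝ) ^
              (-(((t : ℝ) * ((r : ℝ) - t + 1) -
                  g r * min (t : ℝ) ((r : ℝ) - t + 1)) / q r))) < 1 / 2 := by
  change Tendsto (fun r => ∑ t ∈ Icc 1 r, beckSummand (g r) (q r) r t) atTop (𝓝 0) ∧
    ∀ᶠ r in atTop, ∑ t ∈ Icc 1 r, beckSummand (g r) (q r) r t < 1 / 2
  have hγ : ∀ᶠ r : ℕ in atTop, g r ≤ r / 6 := by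
    filter_upwards [hg.bound (by norm_num : (0 : ℝ) < 1 / 6)] with r hr
    rw [Real.norm_natCast] at hr
    linarith [le_abs_self (g r), Real.norm_eq_abs (g r)]
  have hbound : ∀ᶠ r : ℕ in atTop, ∑ t ∈ Icc 1 r, beckSummand (g r) (q r) r t ≤ 1 / r := by
    filter_upwards [hq, hγ, eventually_ge_atTop 2] with r ⟨hq₀, hqr⟩ hγr hr
    exact sum_beckSummand_le_inv hr hq₀ hqr hγr
  have hlim := squeeze_zero' (.of_forall fun r => sum_nonneg fun t _ => beckSummand_nonneg _ _ r t)
    hbound tendsto_one_div_atTop_nhds_zero_nat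
  exact ⟨hlim, hlim.eventually (gt_mem_nhds (by norm_num))⟩
end

section
/- For sufficiently large k and q ≤ k/(log k)², we have Σ_{a=1}^{k/log k} C(k,a)·C(k, k-(D+1)a)·2^{-(1-o(1))·a·k/q} = o(1), where D = log log k. -/
/-! Write `L = log k` and `D = log L`. Bounding both binomial coefficients by powers of `k`,
the `a`-th term is at most `exp ((D + 2) a L - (1 - c) log 2 · a k / q)`, and `k / q ≥ L²`.
Once `c ≤ 1/2` the negative part is at least `a L² / 4`, and since `D = o(L)` it wins, so
every term is at most `k⁻²`; there are at most `k` terms, hence the sum is at most `k⁻¹`. -/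

open Filter Real

theorem Nat.choose_sub_le_pow {n : ℕ} (hn : 0 < n) (m : ℕ) : n.choose (n - m) ≤ n ^ m := by
  rcases le_or_gt m n with hmn | hnm
  · rw [Nat.choose_symm hmn]
    exact Nat.choose_le_pow n m
  · rw [Nat.sub_eq_zero_of_le hnm.le, Nat.choose_zero_right]
    exact Nat.one_le_pow _ _ hn

lemma natCast_pow_eq_exp {n : ℕ} (hn : 0 < n) (m : ℕ) : (n : ℝ) ^ m = exp (m * log n) := by
  rw [exp_nat_mul, exp_log (by exact_mod_cast hn)]

lemma two_rpow_neg_le_exp {x : ℝ} (hx : 0 ≤ x) : (2 : ℝ) ^ (-x) ≤ exp (-(x / 2)) := by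
  rw [rpow_def_of_pos two_pos, exp_le_exp]
  nlinarith [log_two_gt_d9]

lemma eventually_log_le_mul {ε : ℝ} (hε : 0 < ε) : ∀ᶠ y : ℝ in atTop, log y ≤ ε * y := by
  filter_upwards [isLittleO_log_id_atTop.bound hε, eventually_ge_atTop 0] with y hy hy0
  simpa [abs_of_nonneg hy0] using (le_abs_self _).trans hy

lemma add_mul_sub_mul_sq_div_four_le {L D a m : ℝ} (hL : 32 ≤ L) (hD : D ≤ L / 8) (ha : 1 ≤ a)
    (hm : m ≤ (D + 1) * a) : (a + m) * L - a * L ^ 2 / 4 ≤ -(2 * L) := by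
  nlinarith [mul_le_mul_of_nonneg_right hm (by linarith : (0 : ℝ) ≤ L),
    mul_le_mul_of_nonneg_right hD (by nlinarith : (0 : ℝ) ≤ a * L),
    mul_le_mul_of_nonneg_right ha (by linarith : (0 : ℝ) ≤ L)]

lemma choose_mul_choose_mul_two_rpow_le {k a m : ℕ} {x : ℝ} (hL : 32 ≤ log k)
    (hD : log (log k) ≤ log k / 8) (ha : 1 ≤ a) (hm : (m : ℝ) ≤ (log (log k) + 1) * a)
    (hx : a * log k ^ 2 / 2 ≤ x) :
    (k.choose a : ℝ) * k.choose (k - m) * 2 ^ (-x) ≤ ((k : ℝ) ^ 2)⁻¹ := by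
  have hk : 0 < k := Nat.pos_of_ne_zero <| by rintro rfl; norm_num at hL
  have hx0 : 0 ≤ x := le_trans (by positivity) hx
  calc (k.choose a : ℝ) * k.choose (k - m) * 2 ^ (-x)
      ≤ (k : ℝ) ^ a * (k : ℝ) ^ m * exp (-(x / 2)) := by
        gcongr
        · exact_mod_cast Nat.choose_le_pow k a
        · exact_mod_cast Nat.choose_sub_le_pow hk m
        · exact two_rpow_neg_le_exp hx0
    _ = exp ((a + m) * log k - x / 2) := by
        rw [natCast_pow_eq_exp hk, natCast_pow_eq_exp hk, ← exp_add, ← exp_add]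
        ring_nf
    _ ≤ exp (-(2 * log k)) := by
        have := add_mul_sub_mul_sq_div_four_le hL hD (by exact_mod_cast ha) hm
        gcongr
        linarith
    _ = ((k : ℝ) ^ 2)⁻¹ := by
        rw [exp_neg, ← Nat.cast_ofNat, ← natCast_pow_eq_exp hk]

lemma sum_choose_mul_choose_mul_two_rpow_le_inv {k : ℕ} {q c : ℝ} (hq : 0 < q)
    (hqk : q ≤ k / log k ^ 2) (hc : c ≤ 1 / 2) (hL : 32 ≤ log k)
    (hD : log (log k) ≤ log k / 8) :
    ∑ a ∈ Finset.Icc 1 ⌊(k : ℝ) / log k⌋₊,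
        (k.choose a : ℝ) * (k.choose (k - ⌊(log (log k) + 1) * (a : ℝ)⌋₊) : ℝ) *
          (2 : ℝ) ^ (-((1 - c) * (a : ℝ) * (k : ℝ) / q)) ≤ (k : ℝ)⁻¹ := by
  have hkq : log k ^ 2 ≤ k / q := by
    rw [le_div_iff₀ hq, mul_comm]
    rwa [le_div_iff₀ (by positivity)] at hqk
  have hterm : ∀ a ∈ Finset.Icc 1 ⌊(k : ℝ) / log k⌋₊,
      (k.choose a : ℝ) * (k.choose (k - ⌊(log (log k) + 1) * (a : ℝ)⌋₊) : ℝ) *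
        (2 : ℝ) ^ (-((1 - c) * (a : ℝ) * (k : ℝ) / q)) ≤ ((k : ℝ) ^ 2)⁻¹ := by
    intro a ha
    have hD0 : 0 ≤ log (log k) := log_nonneg (by linarith)
    refine choose_mul_choose_mul_two_rpow_le hL hD (Finset.mem_Icc.1 ha).1
      (Nat.floor_le (by positivity)) ?_
    calc (a : ℝ) * log k ^ 2 / 2 = 1 / 2 * a * log k ^ 2 := by ring
      _ ≤ (1 - c) * a * (k / q) := by
        gcongr
        · exact mul_nonneg (by linarith) a.cast_nonneg
        · linarith
      _ = (1 - c) * a * k / q := by ring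
  have hcard : (⌊(k : ℝ) / log k⌋₊ : ℝ) ≤ k :=
    (Nat.floor_le (by positivity)).trans (div_le_self (by positivity) (by linarith))
  calc _ ≤ (Finset.Icc 1 ⌊(k : ℝ) / log k⌋₊).card • ((k : ℝ) ^ 2)⁻¹ :=
        Finset.sum_le_card_nsmul _ _ _ hterm
    _ ≤ k * ((k : ℝ) ^ 2)⁻¹ := by
        rw [Nat.card_Icc, add_tsub_cancel_right, nsmul_eq_mul]
        gcongr
    _ = (k : ℝ)⁻¹ := by
        rw [sq, mul_inv, ← mul_assoc, mul_inv_cancel₀ (by rintro h; norm_num [h] at hL), one_mul]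

/-- For `q k ≤ k / (log k)²` and any `c k = o(1)`, with
`D = log log k`, the sum
`∑_{a=1}^{k/log k} C(k,a) C(k, k-(D+1)a) 2^{-(1 - c k)·a·k / q k}` is `o(1)`. -/
theorem stmt_11 (q c : ℕ → ℝ)
    (hq : ∀ᶠ k : ℕ in atTop, 0 < q k ∧ q k ≤ (k : ℝ) / (Real.log k) ^ 2)
    (hc : Tendsto c atTop (nhds 0)) :
    Tendsto (fun k : ℕ =>
        ∑ a ∈ Finset.Icc 1 ⌊(k : ℝ) / Real.log k⌋₊,
          (k.choose a : ℝ) *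
            (k.choose (k - ⌊(Real.log (Real.log k) + 1) * (a : ℝ)⌋₊) : ℝ) *
            (2 : ℝ) ^ (-((1 - c k) * (a : ℝ) * (k : ℝ) / q k)))
      atTop (nhds 0) := by
  have hlog : Tendsto (fun k : ℕ => log k) atTop atTop :=
    tendsto_log_atTop.comp tendsto_natCast_atTop_atTop
  have hloglog : ∀ᶠ k : ℕ in atTop, log (log k) ≤ log k / 8 := by
    filter_upwards [hlog.eventually (eventually_log_le_mul (by norm_num : (0 : ℝ) < 1 / 8))]
      with k hk
    linarith
  have hbound : ∀ᶠ k : ℕ in atTop,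
      ∑ a ∈ Finset.Icc 1 ⌊(k : ℝ) / Real.log k⌋₊,
        (k.choose a : ℝ) * (k.choose (k - ⌊(Real.log (Real.log k) + 1) * (a : ℝ)⌋₊) : ℝ) *
          (2 : ℝ) ^ (-((1 - c k) * (a : ℝ) * (k : ℝ) / q k)) ≤ (k : ℝ)⁻¹ := by
    filter_upwards [hq, hc.eventually (eventually_le_nhds one_half_pos),
      hlog.eventually_ge_atTop 32, hloglog] with k hqk hck hL hD
    exact sum_choose_mul_choose_mul_two_rpow_le_inv hqk.1 hqk.2 hck hL hD
  refine tendsto_of_tendsto_of_tendsto_of_le_of_le' tendsto_const_nhds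
    (tendsto_inv_atTop_zero.comp tendsto_natCast_atTop_atTop)
    (Eventually.of_forall fun k => ?_) hbound
  positivity
end

section
/- Let k be a sufficiently large positive integer and let G be a graph on k vertices with maximum degree at most k^{0.95}. Let ℓ ≥ 1 and let L = {a₁,…,a_ℓ, b₁,…,b_ℓ} be 2ℓ distinct vertices of G. Let k₁,…,k_ℓ be integers with Σᵢ kᵢ = k - 2ℓ and each kᵢ ≥ k^{0.2}. Then there exists a partition V(G) \ L = V₁ ∪ … ∪ V_ℓ such that for each i: |Vᵢ| = kᵢ, and the induced subgraph G[Vᵢ ∪ {aᵢ, bᵢ}] has maximum degree at most 10·kᵢ·k^{-0.05}. -/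
/-!
Let `W = V \ L` and `n = #W = k - 2ℓ`. Choose the parts uniformly at random among the maps
`W → Fin ℓ` whose fibres have sizes `kᵢ`. By symmetry a fixed `t`-set lies in the `i`-th fibre
for a fraction `C(kᵢ, t) / C(n, t)` of these maps, so a vertex with `d` neighbours has at least `t`
of them in part `i` for at most a fraction `C(d, t) C(kᵢ, t) / C(n, t) ≤ 2⁻ᵗ` of the maps, as soon
as `6 d kᵢ ≤ (n + 1 - t) t`. With `c = k^0.05` we have `k = c²⁰`, `d ≤ c¹⁹`, `kᵢ ≥ c⁴`, and the
threshold `t ≈ 10 kᵢ / c ≥ 9 c³` satisfies this, while `k ℓ 2^(-9c³) < 1`; so the union bound over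
all vertices and parts leaves a good partition. Adding `aᵢ, bᵢ` costs at most two neighbours.
-/

open Finset Function

lemma Finset.exists_mem_forall_not_of_sum_card_filter_lt {β κ : Type*} [Fintype κ]
    {s : Finset β} (p : κ → β → Prop) [∀ j, DecidablePred (p j)]
    (h : ∑ j, #{x ∈ s | p j x} < #s) : ∃ x ∈ s, ∀ j, ¬p j x := by
  classical
  by_contra! hcon
  refine h.not_ge ((card_le_card fun x hx => ?_).trans card_biUnion_le)
  obtain ⟨j, hj⟩ := hcon x hx
  exact mem_biUnion.2 ⟨j, mem_univ _, mem_filter.2 ⟨hx, hj⟩⟩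

lemma pow_div_three_le_factorial (t : ℕ) : ((t : ℝ) / 3) ^ t ≤ t.factorial := by
  have hexp : Real.exp t ≤ 3 ^ t := by
    rw [← Real.exp_one_pow]
    exact pow_le_pow_left₀ (Real.exp_pos 1).le (Real.exp_one_lt_d9.trans (by norm_num)).le t
  have h := (Real.pow_div_factorial_le_exp (t : ℝ) (Nat.cast_nonneg t) t).trans hexp
  rw [div_le_iff₀ (by positivity)] at h
  rw [div_pow, div_le_iff₀ (by positivity)]
  linarith

lemma choose_mul_choose_le_half_pow_mul_choose {d m n t : ℕ}
    (h : 6 * d * m ≤ (n + 1 - t) * t) :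
    (d.choose t * m.choose t : ℝ) ≤ (1 / 2) ^ t * n.choose t := by
  have hdm : (d * m : ℝ) ≤ ((n + 1 - t : ℕ) : ℝ) * t / 6 := by
    rw [le_div_iff₀ (by norm_num)]
    exact_mod_cast (by linarith : d * m * 6 ≤ (n + 1 - t) * t)
  have hfac : ((t : ℝ) / 3) ^ t / t.factorial ≤ 1 :=
    div_le_one_of_le₀ (pow_div_three_le_factorial t) (by positivity)
  calc (d.choose t * m.choose t : ℝ)
      ≤ d ^ t / t.factorial * (m ^ t / t.factorial) :=
        mul_le_mul (Nat.choose_le_pow_div t d) (Nat.choose_le_pow_div t m) (by positivity)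
          (by positivity)
    _ = (d * m) ^ t / t.factorial / t.factorial := by ring
    _ ≤ (((n + 1 - t : ℕ) : ℝ) * t / 6) ^ t / t.factorial / t.factorial := by gcongr
    _ = (1 / 2) ^ t * (((t : ℝ) / 3) ^ t / t.factorial) *
          (((n + 1 - t : ℕ) : ℝ) ^ t / t.factorial) := by
        rw [show ((n + 1 - t : ℕ) : ℝ) * t / 6 = 1 / 2 * (t / 3) * (n + 1 - t : ℕ) by ring,
          mul_pow, mul_pow]
        ring
    _ ≤ (1 / 2) ^ t * 1 * n.choose t := by
        gcongr
        exact Nat.pow_le_choose t n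
    _ = (1 / 2) ^ t * n.choose t := by rw [mul_one]

namespace RandomPartition

variable {α ι : Type*} [Fintype α] [DecidableEq α] [Fintype ι] [DecidableEq ι]

def funsWithFiberCard (c : ι → ℕ) : Finset (α → ι) := {f | ∀ i, #{x | f x = i} = c i}

variable {c : ι → ℕ}

lemma mem_funsWithFiberCard {f : α → ι} :
    f ∈ funsWithFiberCard c ↔ ∀ i, #{x | f x = i} = c i := by
  simp [funsWithFiberCard]

lemma comp_mem_funsWithFiberCard {f : α → ι} (hf : f ∈ funsWithFiberCard c) (π : Equiv.Perm α) :
    f ∘ π ∈ funsWithFiberCard c :=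
  mem_funsWithFiberCard.2 fun i =>
    (card_equiv π (by simp)).trans (mem_funsWithFiberCard.1 hf i)

lemma funsWithFiberCard_nonempty (hc : ∑ i, c i = Fintype.card α) :
    (funsWithFiberCard (α := α) c).Nonempty := by
  let e : α ≃ Σ i, Fin (c i) := Fintype.equivOfCardEq (by simp [hc])
  refine ⟨fun x => (e x).1, mem_funsWithFiberCard.2 fun i => ?_⟩
  rw [card_equiv e (t := {s | s.1 = i}) (by simp), ← Fintype.card_subtype,
    Fintype.card_congr (Equiv.sigmaSubtype i), Fintype.card_fin]

lemma card_filter_forall_eq_of_card_eq (c : ι → ℕ) (i : ι) {T T' : Finset α} (h : #T = #T') :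
    #{f ∈ funsWithFiberCard c | ∀ x ∈ T, f x = i} =
      #{f ∈ funsWithFiberCard c | ∀ x ∈ T', f x = i} := by
  let e : {x // x ∈ T'} ≃ {x // x ∈ T} := Fintype.equivOfCardEq (by simp [h])
  have hπ : ∀ x, x ∈ T' ↔ e.extendSubtype x ∈ T := fun x =>
    ⟨e.extendSubtype_mem x, not_imp_not.mp (e.extendSubtype_not_mem x)⟩
  refine card_nbij' (· ∘ e.extendSubtype) (· ∘ e.extendSubtype.symm) ?_ ?_ ?_ ?_ <;>
    simp only [Set.MapsTo, Set.LeftInvOn, coe_filter, Set.mem_ofPred_eq]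
  · exact fun f ⟨hf, hT⟩ => ⟨comp_mem_funsWithFiberCard hf _, fun x hx => hT _ ((hπ x).1 hx)⟩
  · refine fun f ⟨hf, hT'⟩ => ⟨comp_mem_funsWithFiberCard hf _, fun x hx => ?_⟩
    simpa using hT' _ ((hπ _).2 (by simpa using hx))
  · intro f _; ext; simp
  · intro f _; ext; simp

-- Double counting the pairs `(T, f)` with `f = i` on `T`; by the symmetry above every `T` of the
-- given size is counted equally often.
lemma card_filter_forall_mul_choose (i : ι) (T : Finset α) :
    #{f ∈ funsWithFiberCard c | ∀ x ∈ T, f x = i} * (Fintype.card α).choose #T =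
      #(funsWithFiberCard (α := α) c) * (c i).choose #T := by
  rw [mul_comm, ← card_univ, ← card_powersetCard]
  refine card_mul_eq_card_mul (fun T' f => ∀ x ∈ T', f x = i) (fun T' hT' => ?_) (fun f hf => ?_)
  · exact card_filter_forall_eq_of_card_eq c i (mem_powersetCard.1 hT').2
  · rw [← mem_funsWithFiberCard.1 hf i, ← card_powersetCard]
    congr 1
    ext T'
    simp [bipartiteBelow, subset_iff, and_comm]

lemma card_filter_le_card_filter_mul_choose (M : Finset α) (i : ι) (t : ℕ) :
    #{f ∈ funsWithFiberCard (α := α) c | t ≤ #{x ∈ M | f x = i}} * (Fintype.card α).choose t ≤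
      (#M).choose t * (#(funsWithFiberCard (α := α) c) * (c i).choose t) := by
  have hcover : {f ∈ funsWithFiberCard (α := α) c | t ≤ #{x ∈ M | f x = i}} ⊆
      (M.powersetCard t).biUnion fun T => {f ∈ funsWithFiberCard c | ∀ x ∈ T, f x = i} := by
    intro f hf
    rw [mem_filter] at hf
    obtain ⟨T, hTM, rfl⟩ := exists_subset_card_eq hf.2
    refine mem_biUnion.2 ⟨T, mem_powersetCard.2 ⟨hTM.trans (filter_subset _ _), rfl⟩, ?_⟩
    exact mem_filter.2 ⟨hf.1, fun x hx => (mem_filter.1 (hTM hx)).2⟩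
  calc _ ≤ (∑ T ∈ M.powersetCard t, #{f ∈ funsWithFiberCard c | ∀ x ∈ T, f x = i}) *
          (Fintype.card α).choose t :=
        Nat.mul_le_mul_right _ ((card_le_card hcover).trans card_biUnion_le)
    _ = ∑ T ∈ M.powersetCard t, #(funsWithFiberCard (α := α) c) * (c i).choose t := by
        rw [sum_mul]
        refine sum_congr rfl fun T hT => ?_
        rw [← (mem_powersetCard.1 hT).2]
        exact card_filter_forall_mul_choose i T
    _ = _ := by rw [sum_const, card_powersetCard, smul_eq_mul]

lemma card_filter_le_half_pow {M : Finset α} {i : ι} {t : ℕ} (ht : t ≤ Fintype.card α)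
    (hM : 6 * #M * c i ≤ (Fintype.card α + 1 - t) * t) :
    (#{f ∈ funsWithFiberCard (α := α) c | t ≤ #{x ∈ M | f x = i}} : ℝ) ≤
      #(funsWithFiberCard (α := α) c) * (1 / 2) ^ t := by
  set F := funsWithFiberCard (α := α) c
  have hcount : (#{f ∈ F | t ≤ #{x ∈ M | f x = i}} * (Fintype.card α).choose t : ℝ) ≤
      #F * ((#M).choose t * (c i).choose t) := by
    rw [mul_left_comm]
    exact_mod_cast card_filter_le_card_filter_mul_choose M i t
  refine le_of_mul_le_mul_right (hcount.trans ?_) (Nat.cast_pos.2 (Nat.choose_pos ht))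
  rw [mul_assoc]
  exact mul_le_mul_of_nonneg_left (choose_mul_choose_le_half_pow_mul_choose hM)
    (Nat.cast_nonneg _)

theorem exists_mem_funsWithFiberCard_forall_card_filter_lt {κ : Type*} [Fintype κ]
    (hc : ∑ i, c i = Fintype.card α) (M : κ → Finset α) (t : ι → ℕ)
    (ht : ∀ i, t i ≤ Fintype.card α)
    (hM : ∀ v i, 6 * #(M v) * c i ≤ (Fintype.card α + 1 - t i) * t i)
    (hsum : Fintype.card κ * ∑ i, (1 / 2 : ℝ) ^ t i < 1) :
    ∃ f ∈ funsWithFiberCard c, ∀ v i, #{x ∈ M v | f x = i} < t i := by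
  set F := funsWithFiberCard (α := α) c
  have hF : (0 : ℝ) < #F := Nat.cast_pos.2 (funsWithFiberCard_nonempty hc).card_pos
  have hbad : (∑ p : κ × ι, #{f ∈ F | t p.2 ≤ #{x ∈ M p.1 | f x = p.2}} : ℝ) < #F :=
    calc _ ≤ ∑ p : κ × ι, #F * (1 / 2 : ℝ) ^ t p.2 :=
          sum_le_sum fun p _ => card_filter_le_half_pow (ht _) (hM _ _)
      _ = #F * (Fintype.card κ * ∑ i, (1 / 2 : ℝ) ^ t i) := by
          simp only [← mul_sum, Fintype.sum_prod_type, sum_const, card_univ, nsmul_eq_mul]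
      _ < #F * 1 := mul_lt_mul_of_pos_left hsum hF
      _ = #F := mul_one _
  obtain ⟨f, hf, hgood⟩ := exists_mem_forall_not_of_sum_card_filter_lt
    (fun (p : κ × ι) f => t p.2 ≤ #{x ∈ M p.1 | f x = p.2}) (s := F) (by exact_mod_cast hbad)
  exact ⟨f, hf, fun v i => not_le.1 (hgood (v, i))⟩

end RandomPartition

theorem Finset.exists_partition_forall_card_inter_lt {V ι κ : Type*} [DecidableEq V]
    [Fintype ι] [DecidableEq ι] [Fintype κ] (W : Finset V) (c : ι → ℕ) (hc : ∑ i, c i = #W)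
    (M : κ → Finset V) (t : ι → ℕ) (ht : ∀ i, t i ≤ #W)
    (hM : ∀ v i, 6 * #(M v) * c i ≤ (#W + 1 - t i) * t i)
    (hsum : Fintype.card κ * ∑ i, (1 / 2 : ℝ) ^ t i < 1) :
    ∃ P : ι → Finset V, Pairwise (Disjoint on P) ∧ univ.biUnion P = W ∧
      (∀ i, #(P i) = c i) ∧ ∀ v i, #(M v ∩ P i) < t i := by
  have hMW : ∀ v i, 6 * #((M v).subtype (· ∈ W)) * c i ≤ (Fintype.card W + 1 - t i) * t i :=
    fun v i => by
      rw [Fintype.card_coe, card_subtype]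
      exact le_trans (by gcongr; exact filter_subset _ _) (hM v i)
  obtain ⟨f, hf, hgood⟩ := RandomPartition.exists_mem_funsWithFiberCard_forall_card_filter_lt
    (by rwa [Fintype.card_coe]) (fun v => (M v).subtype (· ∈ W)) t
    (by simpa only [Fintype.card_coe] using ht) hMW hsum
  refine ⟨fun i => ({x | f x = i} : Finset W).map (Embedding.subtype _), fun i j hij => ?_, ?_,
    fun i => ?_, fun v i => ?_⟩
  · rw [onFun, disjoint_map]
    exact disjoint_filter.2 fun x _ hi hj => hij (hi.symm.trans hj)
  · ext u
    simp
  · rw [card_map, RandomPartition.mem_funsWithFiberCard.1 hf i]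
  · convert hgood v i using 1
    rw [← card_map (Embedding.subtype _)]
    congr 1
    ext u
    simp

lemma exists_nat_threshold {c x : ℝ} (hc : 100 ≤ c) (hx : c ^ 4 ≤ x) :
    ∃ t : ℕ, c * (t + 1) ≤ 10 * x ∧ 9 * x ≤ c * t := by
  have hc0 : 0 < c := by linarith
  have h2c : 2 * c ≤ x := by nlinarith [pow_le_pow_left₀ (by norm_num) hc 3]
  set y := 10 * x / c with hy
  have hxy : 10 * x = c * y := by rw [hy]; field_simp
  have hfloor : 1 ≤ ⌊y⌋₊ := Nat.le_floor (by rw [hy, le_div_iff₀ hc0]; push_cast; linarith)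
  refine ⟨⌊y⌋₊ - 1, ?_, ?_⟩ <;> rw [Nat.cast_sub hfloor, Nat.cast_one]
  · rw [sub_add_cancel, hxy]
    exact mul_le_mul_of_nonneg_left (Nat.floor_le (div_nonneg (by linarith) hc0.le)) hc0.le
  · nlinarith [Nat.lt_floor_add_one y]

lemma pow_forty_le_two_pow {c : ℝ} (hc : 100 ≤ c) {t : ℕ} (ht : 9 * c ^ 3 ≤ t) :
    c ^ 40 ≤ 2 ^ t := by
  have hc0 : 0 < c := by linarith
  rw [← Real.log_le_log_iff (by positivity) (by positivity), Real.log_pow, Real.log_pow]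
  have hlog := Real.log_le_sub_one_of_pos hc0
  have hlog2 := Real.log_two_gt_d9
  have hct : 900 * c ≤ t := by nlinarith [mul_le_mul hc hc (by norm_num) hc0.le]
  push_cast
  nlinarith [mul_le_mul_of_nonneg_right hct (Real.log_pos one_lt_two).le]

lemma card_mul_sum_half_pow_lt_one {ι κ : Type*} [Fintype ι] [Fintype κ] {c : ℝ}
    (hc : 100 ≤ c) (hκ : (Fintype.card κ : ℝ) ≤ c ^ 20)
    (hι : Fintype.card ι * c ^ 4 ≤ c ^ 20) {t : ι → ℕ} (ht : ∀ i, 9 * c ^ 3 ≤ t i) :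
    Fintype.card κ * ∑ i, (1 / 2 : ℝ) ^ t i < 1 := by
  have hc0 : 0 < c := by linarith
  have hterm : ∀ i, (1 / 2 : ℝ) ^ t i ≤ (c ^ 40)⁻¹ := fun i => by
    rw [one_div, inv_pow]
    exact inv_anti₀ (by positivity) (pow_forty_le_two_pow hc (ht i))
  have hι' : (Fintype.card ι : ℝ) ≤ c ^ 16 :=
    le_of_mul_le_mul_right (by rwa [← pow_add]) (by positivity : 0 < c ^ 4)
  calc _ ≤ c ^ 20 * (Fintype.card ι * (c ^ 40)⁻¹) := by
        gcongr
        simpa using sum_le_card_nsmul univ _ _ fun i _ => hterm i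
    _ ≤ c ^ 20 * (c ^ 16 * (c ^ 40)⁻¹) := by gcongr
    _ = (c ^ 4)⁻¹ := by field_simp
    _ < 1 := inv_lt_one_of_one_lt₀ (one_lt_pow₀ (by linarith) (by norm_num))

lemma ten_mul_le_of_threshold {c : ℝ} (hc : 100 ≤ c) {m n t : ℕ} (hmn : m ≤ n)
    (ht : c * (t + 1) ≤ 10 * m) : 10 * t ≤ n := by
  have : (m : ℝ) ≤ n := by exact_mod_cast hmn
  have : (10 * t : ℝ) ≤ n := by nlinarith
  exact_mod_cast this

lemma six_mul_le_of_threshold {c : ℝ} (hc : 100 ≤ c) {d m n t : ℕ} (hd : (d : ℝ) ≤ c ^ 19)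
    (hn : 0.9 * c ^ 20 ≤ n) (htn : 10 * t ≤ n) (ht : 9 * m ≤ c * t) :
    6 * d * m ≤ (n + 1 - t) * t := by
  have hc0 : 0 < c := by linarith
  have hsub : ((n + 1 - t : ℕ) : ℝ) = n + 1 - t := by
    rw [Nat.cast_sub (by omega)]; push_cast; ring
  have htn' : (10 * t : ℝ) ≤ n := by exact_mod_cast htn
  have hlarge : 0.81 * c ^ 20 ≤ ((n + 1 - t : ℕ) : ℝ) := by rw [hsub]; linarith
  have key : c * (6 * d * m) ≤ c * (((n + 1 - t : ℕ) : ℝ) * t) :=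
    calc c * (6 * d * m) = 6 * (c * d) * m := by ring
      _ ≤ 6 * c ^ 20 * m := by
          gcongr
          calc c * d ≤ c * c ^ 19 := by gcongr
            _ = c ^ 20 := by ring
      _ ≤ 0.81 * c ^ 20 * (9 * m) := by nlinarith [pow_pos hc0 20]
      _ ≤ ((n + 1 - t : ℕ) : ℝ) * (c * t) := by gcongr
      _ = c * (((n + 1 - t : ℕ) : ℝ) * t) := by ring
  exact_mod_cast le_of_mul_le_mul_left key hc0

theorem SimpleGraph.exists_partition_forall_card_neighborFinset_inter_le {V ι : Type*}
    [Fintype V] [DecidableEq V] [Fintype ι] [DecidableEq ι] (G : SimpleGraph V)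
    [DecidableRel G.Adj] {c : ℝ} (hc : 100 ≤ c) (hV : (Fintype.card V : ℝ) = c ^ 20)
    (hdeg : ∀ v, (G.degree v : ℝ) ≤ c ^ 19) (W : Finset V)
    (hW : Fintype.card V ≤ #W + 2 * Fintype.card ι) (ks : ι → ℕ) (hsum : ∑ i, ks i = #W)
    (hks : ∀ i, c ^ 4 ≤ ks i) :
    ∃ P : ι → Finset V, Pairwise (Disjoint on P) ∧ univ.biUnion P = W ∧
      (∀ i, #(P i) = ks i) ∧ ∀ i v, c * (#(G.neighborFinset v ∩ P i) + 2) ≤ 10 * ks i := by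
  have hc0 : 0 < c := by linarith
  choose t ht₁ ht₂ using fun i => exists_nat_threshold hc (hks i)
  have hιW : (Fintype.card ι : ℝ) * c ^ 4 ≤ #W :=
    calc _ = ∑ _i : ι, c ^ 4 := by rw [sum_const, card_univ, nsmul_eq_mul]
      _ ≤ ∑ i, (ks i : ℝ) := sum_le_sum fun i _ => hks i
      _ = #W := by exact_mod_cast hsum
  have hWV : (#W : ℝ) ≤ c ^ 20 := hV ▸ Nat.cast_le.2 (card_le_univ W)
  have hn : 0.9 * c ^ 20 ≤ #W := by
    have : (Fintype.card V : ℝ) ≤ #W + 2 * Fintype.card ι := by exact_mod_cast hW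
    nlinarith [pow_le_pow_left₀ (by norm_num) hc 4]
  have htW : ∀ i, 10 * t i ≤ #W := fun i =>
    ten_mul_le_of_threshold hc (hsum ▸ single_le_sum (fun j _ => Nat.zero_le (ks j)) (mem_univ i))
      (ht₁ i)
  have ht : ∀ i, 9 * c ^ 3 ≤ t i := fun i =>
    le_of_mul_le_mul_left (by nlinarith [hks i, ht₂ i]) hc0
  obtain ⟨P, hdisj, hcover, hcard, hsparse⟩ := W.exists_partition_forall_card_inter_lt ks hsum
    (fun v => G.neighborFinset v) t (fun i => by linarith [htW i])
    (fun v i => six_mul_le_of_threshold hc (by rw [card_neighborFinset_eq_degree]; exact hdeg v)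
      hn (htW i) (ht₂ i))
    (card_mul_sum_half_pow_lt_one hc hV.le (hιW.trans hWV) ht)
  refine ⟨P, hdisj, hcover, hcard, fun i v => ?_⟩
  have : (#(G.neighborFinset v ∩ P i) : ℝ) + 1 ≤ t i := by exact_mod_cast hsparse v i
  nlinarith [ht₁ i]

lemma card_image_union_image_of_injective_sumElim {ι β : Type*} [Fintype ι] [DecidableEq β]
    {a b : ι → β} (hab : Injective (Sum.elim a b)) :
    #(univ.image a ∪ univ.image b) = 2 * Fintype.card ι := by
  have ha : Injective a := hab.comp Sum.inl_injective
  have hb : Injective b := hab.comp Sum.inr_injective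
  rw [card_union_of_disjoint, card_image_of_injective _ ha, card_image_of_injective _ hb,
    card_univ, two_mul]
  simp only [disjoint_left, mem_image, mem_univ, true_and]
  rintro _ ⟨i, rfl⟩ ⟨j, hj⟩
  exact Sum.inl_ne_inr (hab hj.symm)

/-- For sufficiently large `k`: if `G` is a graph on `k`
vertices with maximum degree at most `k^0.95`, `a₁,…,a_ℓ,b₁,…,b_ℓ` are `2ℓ`
distinct vertices, and `k₁,…,k_ℓ` are integers with `∑ kᵢ = k - 2ℓ` and each
`kᵢ ≥ k^0.2`, then the remaining vertices can be partitioned into sets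
`V₁,…,V_ℓ` with `|Vᵢ| = kᵢ` such that every vertex of `Vᵢ ∪ {aᵢ, bᵢ}` has at
most `10·kᵢ·k^{-0.05}` neighbours inside `Vᵢ ∪ {aᵢ, bᵢ}`. -/
theorem stmt_14 :
    ∃ k₀ : ℕ, ∀ k : ℕ, k₀ ≤ k →
      ∀ (G : SimpleGraph (Fin k)) [DecidableRel G.Adj],
        (∀ v, (G.degree v : ℝ) ≤ (k : ℝ) ^ (0.95 : ℝ)) →
        ∀ ℓ : ℕ, 1 ≤ ℓ →
          ∀ a b : Fin ℓ → Fin k, Function.Injective (Sum.elim a b) →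
            ∀ ks : Fin ℓ → ℕ, (∑ i, ks i) = k - 2 * ℓ →
              (∀ i, (k : ℝ) ^ (0.2 : ℝ) ≤ (ks i : ℝ)) →
              ∃ Vs : Fin ℓ → Finset (Fin k),
                (∀ i j, i ≠ j → Disjoint (Vs i) (Vs j)) ∧
                Finset.univ.biUnion Vs =
                  Finset.univ \ (Finset.univ.image a ∪ Finset.univ.image b) ∧
                (∀ i, (Vs i).card = ks i) ∧
                ∀ i, ∀ v ∈ Vs i ∪ {a i, b i},
                  ((G.neighborFinset v ∩ (Vs i ∪ {a i, b i})).card : ℝ) ≤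
                    10 * (ks i : ℝ) * (k : ℝ) ^ (-(0.05 : ℝ)) := by
  refine ⟨10 ^ 40, fun k hk G _ hdeg ℓ _ a b hab ks hsum hks => ?_⟩
  set c := (k : ℝ) ^ (0.05 : ℝ) with hc_def
  have hpow : ∀ (n : ℕ) (r : ℝ), r = 0.05 * n → (k : ℝ) ^ r = c ^ n := fun n r hr => by
    rw [hr, Real.rpow_mul_natCast (Nat.cast_nonneg k)]
  have hk20 : (k : ℝ) = c ^ 20 := by rw [← hpow 20 1 (by norm_num), Real.rpow_one]
  have hc : 100 ≤ c := by
    refine (pow_le_pow_iff_left₀ (by norm_num) (by positivity) (by norm_num : 20 ≠ 0)).1 ?_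
    rw [← hk20]
    exact_mod_cast (by norm_num : 100 ^ 20 = 10 ^ 40).trans_le hk
  have hL := card_image_union_image_of_injective_sumElim hab
  rw [Fintype.card_fin] at hL
  obtain ⟨Vs, hdisj, hcover, hcard, hsparse⟩ :=
    G.exists_partition_forall_card_neighborFinset_inter_le hc (by simpa using hk20)
      (fun v => hpow 19 0.95 (by norm_num) ▸ hdeg v) _
      (by rw [card_univ_sdiff, hL, Fintype.card_fin, Fintype.card_fin]; omega) ks (by rw [card_univ_sdiff, hL]; simpa using hsum)
      (fun i => hpow 4 0.2 (by norm_num) ▸ hks i)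
  refine ⟨Vs, fun i j hij => hdisj hij, hcover, hcard, fun i v _ => ?_⟩
  have hpair : (#(G.neighborFinset v ∩ (Vs i ∪ {a i, b i})) : ℝ) ≤
      #(G.neighborFinset v ∩ Vs i) + 2 := by
    rw [inter_union_distrib_left]
    exact_mod_cast (card_union_le _ _).trans
      (Nat.add_le_add_left ((card_le_card inter_subset_right).trans card_le_two) _)
  rw [Real.rpow_neg (Nat.cast_nonneg k), ← hc_def, ← div_eq_mul_inv, le_div_iff₀ (by linarith)]
  nlinarith [hsparse i v]
end
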